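/- arXiv:2011.08357 — 2 statements merged into one kernel-verified Lean document; each statement's English description precedes it below -/
import Mathlib

section
/- For every integer j with 0 ≤ j ≤ min(⌊d/2⌋, n) − 1, det(N_j) = det(V(2j, 2j+1, …, d)) · det(N_{j+1}) · ∏_{ν ∈ Λ*_{d,n,j+1}} 2(ℓ_ν − ℓ_{ν_{(j)}}). -/
/-!
Order the rows of `N_j` so that the `d - 2j + 1` rows with `μ₂ = j` come first, and the columns
so that the `ν` with `ν = ν_{(j)}`, one for each size `2j ≤ |ν| ≤ d`, come first. The entries in
a row with `μ₂ = j` are `|ν|^{μ₁ - j}`, so the top-left block is `V(2j, …, d)`. Subtracting from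
every other column `ν` the column `ν_{(j)}` of the same size clears its entries in the top rows,
and the identity `h_{m+1}(x, y) - h_{m+1}(x, z) = (y - z) h_m(x, z, y)` for complete homogeneous
sums turns its remaining entries into `2(ℓ_ν - ℓ_{ν_{(j)}})` times those of `N_{j+1}`. The matrix
is now block lower triangular.
-/

open Finset Polynomial

namespace Capelli

/-- The set `ℙ_{k,n}` of pairs `μ = (μ₁, μ₂)` of nonnegative integers with `μ₁ ≥ μ₂`,
`μ₁ + μ₂ = k` and `μ₂ ≤ n`. -/
def Pkn (n k : ℕ) : Finset (ℕ × ℕ) :=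
  (Finset.range (k + 1) ×ˢ Finset.range (k + 1)).filter
    (fun μ => μ.2 ≤ μ.1 ∧ μ.1 + μ.2 = k ∧ μ.2 ≤ n)

/-- The set `ℙ*_{k,n}` of pairs `ν = (ν₁, ν₂)` of nonnegative integers with `ν₁ ≥ ν₂`,
`ν₁ + ν₂ = k` and `ν₂ ≥ ⌊k/2⌋ - n` (written here additively to avoid truncated subtraction). -/
def PknStar (n k : ℕ) : Finset (ℕ × ℕ) :=
  (Finset.range (k + 1) ×ˢ Finset.range (k + 1)).filter
    (fun ν => ν.2 ≤ ν.1 ∧ ν.1 + ν.2 = k ∧ k / 2 ≤ ν.2 + n)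

/-- `Λ_{d,n} = ⋃_{k=0}^d ℙ_{k,n}`. -/
def Lam (n d : ℕ) : Finset (ℕ × ℕ) := (Finset.range (d + 1)).biUnion (Pkn n)

/-- `Λ*_{d,n} = ⋃_{k=0}^d ℙ*_{k,n}`. -/
def LamStar (n d : ℕ) : Finset (ℕ × ℕ) := (Finset.range (d + 1)).biUnion (PknStar n)

/-- `ℓ_ν = min(ν₁ - ν₂, 2n + 1 - (ν₁ - ν₂))`. -/
def ell (n : ℕ) (ν : ℕ × ℕ) : ℕ := min (ν.1 - ν.2) (2 * n + 1 - (ν.1 - ν.2))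

/-- `Λ_{d,n,j} = {μ ∈ Λ_{d,n} : μ₂ ≥ j}`. -/
def Lamj (n d j : ℕ) : Finset (ℕ × ℕ) := (Lam n d).filter (fun μ => j ≤ μ.2)

/-- `Λ*_{d,n,j} = {ν ∈ Λ*_{d,n} : ν₂ ≤ ⌊|ν|/2⌋ - j}`. -/
def LamStarj (n d j : ℕ) : Finset (ℕ × ℕ) :=
  (LamStar n d).filter (fun ν => ν.2 + j ≤ (ν.1 + ν.2) / 2)

/-- `ν_{(j)} = (|ν| - ⌊|ν|/2⌋ + j, ⌊|ν|/2⌋ - j)`. -/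
def nuSub (ν : ℕ × ℕ) (j : ℕ) : ℕ × ℕ :=
  (ν.1 + ν.2 - (ν.1 + ν.2) / 2 + j, (ν.1 + ν.2) / 2 - j)

/-- The polynomial `λ_{μ,ν}(x) = ((2x+1)ℓ_ν - ℓ_ν²)^{μ₂} (ν₁+ν₂)^{μ₁-μ₂} ∈ ℤ[x]`. -/
noncomputable def lamPoly (n : ℕ) (μ ν : ℕ × ℕ) : Polynomial ℤ :=
  ((2 * X + 1) * C (ell n ν : ℤ) - C ((ell n ν : ℤ) ^ 2)) ^ μ.2 *
    C ((ν.1 + ν.2 : ℕ) : ℤ) ^ (μ.1 - μ.2)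

/-- The row ordering: `μ ⪯ μ'` iff `μ₂ < μ₂'`, or `μ₂ = μ₂'` and `μ₁ ≤ μ₁'`. -/
def rowRel (μ μ' : ℕ × ℕ) : Prop := μ.2 < μ'.2 ∨ (μ.2 = μ'.2 ∧ μ.1 ≤ μ'.1)

/-- The column ordering: `ν ⩽ ν'` iff `⌊(ν₁-ν₂)/2⌋ < ⌊(ν₁'-ν₂')/2⌋`, or these are equal and
`|ν| ≤ |ν'|`.  (A further tie-break by the first coordinate is added so that the relation is
antisymmetric on all of `ℕ × ℕ`; on `Λ*_{d,n}` a tie in the first two comparisons forces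
equality, so this agrees with the ordering of the paper there.) -/
def colRel (ν ν' : ℕ × ℕ) : Prop :=
  (ν.1 - ν.2) / 2 < (ν'.1 - ν'.2) / 2 ∨
    ((ν.1 - ν.2) / 2 = (ν'.1 - ν'.2) / 2 ∧
      (ν.1 + ν.2 < ν'.1 + ν'.2 ∨ (ν.1 + ν.2 = ν'.1 + ν'.2 ∧ ν.1 ≤ ν'.1)))

instance : DecidableRel rowRel := fun a b =>
  inferInstanceAs (Decidable (a.2 < b.2 ∨ (a.2 = b.2 ∧ a.1 ≤ b.1)))

instance : IsTrans (ℕ × ℕ) rowRel := ⟨by intro a b c; unfold rowRel; omega⟩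

instance : IsTotal (ℕ × ℕ) rowRel := ⟨by intro a b; unfold rowRel; omega⟩

instance : IsAntisymm (ℕ × ℕ) rowRel :=
  ⟨by intro a b h1 h2; unfold rowRel at h1 h2; rw [Prod.ext_iff]; omega⟩

instance : DecidableRel colRel := fun a b =>
  inferInstanceAs (Decidable ((a.1 - a.2) / 2 < (b.1 - b.2) / 2 ∨
    ((a.1 - a.2) / 2 = (b.1 - b.2) / 2 ∧
      (a.1 + a.2 < b.1 + b.2 ∨ (a.1 + a.2 = b.1 + b.2 ∧ a.1 ≤ b.1)))))

instance : IsTrans (ℕ × ℕ) colRel := ⟨by intro a b c; unfold colRel; omega⟩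

instance : IsTotal (ℕ × ℕ) colRel := ⟨by intro a b; unfold colRel; omega⟩

instance : IsAntisymm (ℕ × ℕ) colRel :=
  ⟨by intro a b h1 h2; unfold colRel at h1 h2; rw [Prod.ext_iff]; omega⟩

/-- The elements of `Λ_{d,n}` listed in increasing order for `⪯`. -/
def rowList (n d : ℕ) : List (ℕ × ℕ) := (Lam n d).sort rowRel

/-- The elements of `Λ*_{d,n}` listed in increasing order for `⩽`. -/
def colList (n d : ℕ) : List (ℕ × ℕ) := (LamStar n d).sort colRel

/-- The elements of `Λ_{d,n,j}` listed in increasing order for `⪯`. -/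
def rowListJ (n d j : ℕ) : List (ℕ × ℕ) := (Lamj n d j).sort rowRel

/-- The elements of `Λ*_{d,n,j}` listed in increasing order for `⩽`. -/
def colListJ (n d j : ℕ) : List (ℕ × ℕ) := (LamStarj n d j).sort colRel

/-- The matrix `M_d = [λ_{μ,ν}]` with rows indexed by `Λ_{d,n}` (ordered by `⪯`) and columns
indexed by `Λ*_{d,n}` (ordered by `⩽`); since `|Λ_{d,n}| = |Λ*_{d,n}|` the column list has
length `(Lam n d).card` and the `getD` access below always hits an actual entry. -/
noncomputable def Md (n d : ℕ) : Matrix (Fin (Lam n d).card) (Fin (Lam n d).card) (Polynomial ℤ) :=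
  fun i j => lamPoly n ((rowList n d).getD i.val (0, 0)) ((colList n d).getD j.val (0, 0))

/-- The matrix `M_d' = [(2ℓ_ν)^{μ₂}(ν₁+ν₂)^{μ₁-μ₂}]` of leading coefficients. -/
def Md' (n d : ℕ) : Matrix (Fin (Lam n d).card) (Fin (Lam n d).card) ℤ :=
  fun i j =>
    let μ := (rowList n d).getD i.val (0, 0)
    let ν := (colList n d).getD j.val (0, 0)
    (2 * (ell n ν : ℤ)) ^ μ.2 * ((ν.1 + ν.2 : ℕ) : ℤ) ^ (μ.1 - μ.2)

/-- `S_{μ,ν,j}` with `m = μ₂ - j`: the complete homogeneous symmetric polynomial of degree `m`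
evaluated at `ℓ_{ν_{(0)}}, …, ℓ_{ν_{(j-1)}}, ℓ_ν`, i.e. the sum over all `(j+1)`-tuples
`(a₀, …, a_j)` of nonnegative integers with `a₀ + ⋯ + a_j = m` of
`ℓ_{ν_{(0)}}^{a₀} ⋯ ℓ_{ν_{(j-1)}}^{a_{j-1}} ℓ_ν^{a_j}`. -/
def Shs (n : ℕ) (ν : ℕ × ℕ) (j m : ℕ) : ℕ :=
  ∑ a ∈ Finset.Nat.antidiagonalTuple (j + 1) m,
    ∏ i : Fin (j + 1), (if (i : ℕ) < j then ell n (nuSub ν (i : ℕ)) else ell n ν) ^ a i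

/-- The matrix `N_j = [2^{μ₂-j}(ν₁+ν₂)^{μ₁-μ₂} S_{μ,ν,j}]` with rows indexed by `Λ_{d,n,j}`
(ordered by `⪯`) and columns indexed by `Λ*_{d,n,j}` (ordered by `⩽`). -/
def Ndj (n d j : ℕ) : Matrix (Fin (Lamj n d j).card) (Fin (Lamj n d j).card) ℤ :=
  fun i i' =>
    let μ := (rowListJ n d j).getD i.val (0, 0)
    let ν := (colListJ n d j).getD i'.val (0, 0)
    2 ^ (μ.2 - j) * ((ν.1 + ν.2 : ℕ) : ℤ) ^ (μ.1 - μ.2) * (Shs n ν j (μ.2 - j) : ℤ)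

/-- The Vandermonde matrix `V(a, a+1, …, a+s-1) = [(a+j)^{i-1}]_{1 ≤ i,j ≤ s}` (0-indexed
as `[(a+j)^i]_{0 ≤ i,j ≤ s-1}`), with the convention `0⁰ = 1`. -/
def vandInt (a s : ℕ) : Matrix (Fin s) (Fin s) ℤ :=
  fun i j => ((a + (j : ℕ) : ℕ) : ℤ) ^ (i : ℕ)

/-- `f(d,s) = #{(ν,ν') ∈ Λ*_{d,n} × Λ*_{d,n} : |ν| = |ν'|, ℓ_{ν'} < ℓ_ν, ℓ_ν + ℓ_{ν'} - 1 = s}`. -/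
def fds (n d : ℕ) (s : ℤ) : ℕ :=
  (((LamStar n d) ×ˢ (LamStar n d)).filter
    (fun p => p.1.1 + p.1.2 = p.2.1 + p.2.2 ∧ ell n p.2 < ell n p.1 ∧
      (ell n p.1 : ℤ) + (ell n p.2 : ℤ) - 1 = s)).card

/-- `g_k(s) = #{(ν,ν') ∈ ℙ*_{k,n} × ℙ*_{k,n} : ℓ_{ν'} < ℓ_ν, ℓ_ν + ℓ_{ν'} - 1 = s}`. -/
def gks (n k : ℕ) (s : ℤ) : ℕ :=
  ((PknStar n k ×ˢ PknStar n k).filter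
    (fun p => ell n p.2 < ell n p.1 ∧ (ell n p.1 : ℤ) + (ell n p.2 : ℤ) - 1 = s)).card

section CompleteHomogeneous

variable {R : Type*} {t : ℕ}

def completeHomogeneous [CommSemiring R] (x : Fin t → R) (m : ℕ) : R :=
  ∑ a ∈ Finset.Nat.antidiagonalTuple t m, ∏ i, x i ^ a i

theorem completeHomogeneous_zero_right [CommSemiring R] (x : Fin t → R) :
    completeHomogeneous x 0 = 1 := by
  simp [completeHomogeneous, Finset.Nat.antidiagonalTuple_zero_right]

theorem completeHomogeneous_snoc [CommSemiring R] (x : Fin t → R) (y : R) (m : ℕ) :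
    completeHomogeneous (Fin.snoc x y) m =
      ∑ a ∈ range (m + 1), y ^ a * completeHomogeneous x (m - a) := by
  simp only [completeHomogeneous, mul_sum]
  rw [sum_sigma']
  refine sum_nbij' (fun a => ⟨a (Fin.last t), Fin.init a⟩) (fun p => Fin.snoc p.2 p.1)
    ?_ ?_ ?_ ?_ ?_
  · intro a ha
    rw [Finset.Nat.mem_antidiagonalTuple, Fin.sum_univ_castSucc] at ha
    simp only [mem_sigma, mem_range, Finset.Nat.mem_antidiagonalTuple, Fin.init]
    omega
  · rintro ⟨a, b⟩ hab
    simp only [mem_sigma, mem_range, Finset.Nat.mem_antidiagonalTuple] at hab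
    rw [Finset.Nat.mem_antidiagonalTuple, Fin.sum_univ_castSucc]
    simp only [Fin.snoc_castSucc, Fin.snoc_last]
    omega
  · intro a _
    exact Fin.snoc_init_self a
  · intro p _
    simp [Fin.init_snoc]
  · intro a _
    rw [Fin.prod_univ_castSucc, Fin.snoc_last, mul_comm]
    simp only [Fin.snoc_castSucc, Fin.init]

theorem completeHomogeneous_snoc_succ [CommSemiring R] (x : Fin t → R) (y : R) (m : ℕ) :
    completeHomogeneous (Fin.snoc x y) (m + 1) =
      completeHomogeneous x (m + 1) + y * completeHomogeneous (Fin.snoc x y) m := by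
  rw [completeHomogeneous_snoc, completeHomogeneous_snoc, sum_range_succ', mul_sum, add_comm]
  simp only [pow_succ', mul_assoc, Nat.add_sub_add_right, pow_zero, one_mul, Nat.sub_zero]

theorem completeHomogeneous_snoc_sub_snoc [CommRing R] (x : Fin t → R) (y z : R) (m : ℕ) :
    completeHomogeneous (Fin.snoc x y) (m + 1) - completeHomogeneous (Fin.snoc x z) (m + 1) =
      (y - z) * completeHomogeneous (Fin.snoc (Fin.snoc x z) y) m := by
  induction m with
  | zero =>
    simp only [completeHomogeneous_snoc_succ, completeHomogeneous_zero_right]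
    ring
  | succ m ih =>
    rw [completeHomogeneous_snoc_succ x y, completeHomogeneous_snoc_succ x z,
      completeHomogeneous_snoc_succ (Fin.snoc x z) y]
    linear_combination y * ih

end CompleteHomogeneous

section SortedLists

variable {α : Type*} (r : α → α → Prop) [DecidableRel r] [IsTrans α r] [Std.Antisymm r]
  [Std.Total r]

theorem sort_eq_append_sort {s t : Finset α} {l : List α} (hl : l.Pairwise r) (hnd : l.Nodup)
    (hs : ∀ x, x ∈ s ↔ x ∈ l ∨ x ∈ t) (hlt : ∀ x ∈ l, ∀ y ∈ t, r x y ∧ x ≠ y) :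
    s.sort r = l ++ t.sort r := by
  classical
  have hlt' : ∀ x ∈ l, ∀ y ∈ t.sort r, r x y ∧ x ≠ y := fun x hx y hy =>
    hlt x hx y ((mem_sort r).1 hy)
  have hnd' : (l ++ t.sort r).Nodup :=
    List.nodup_append.2 ⟨hnd, sort_nodup _ _, fun x hx y hy => (hlt' x hx y hy).2⟩
  refine List.Perm.eq_of_pairwise' (pairwise_sort _ _)
    (List.pairwise_append.2 ⟨hl, pairwise_sort _ _, fun x hx y hy => (hlt' x hx y hy).1⟩)
    (List.perm_of_nodup_nodup_toFinset_eq (sort_nodup _ _) hnd' ?_)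
  ext x
  simp [hs]

theorem getD_sort_mem (s : Finset α) {i : ℕ} (hi : i < s.card) (a : α) :
    (s.sort r).getD i a ∈ s := by
  rw [List.getD_eq_getElem _ _ (by rwa [length_sort]), ← mem_sort r]
  exact List.getElem_mem _

theorem prod_getD_sort {M : Type*} [CommMonoid M] (s : Finset α) {N : ℕ} (h : s.card = N)
    (f : α → M) (a : α) : ∏ c : Fin N, f ((s.sort r).getD c a) = ∏ x ∈ s, f x := by
  classical
  calc ∏ c : Fin N, f ((s.sort r).getD c a)
      = ∏ c : Fin (s.sort r).length, f (s.sort r)[c.1] :=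
        Fintype.prod_equiv (finCongr (by rw [length_sort, h])) _ _ fun c => by
          rw [List.getD_eq_getElem _ _ (by rw [length_sort, h]; exact c.2)]
          rfl
    _ = ∏ x ∈ s, f x := by
        rw [Fin.prod_univ_fun_getElem, ← List.prod_toFinset _ (sort_nodup _ _), sort_toFinset]

end SortedLists

section BlockMatrices

open Matrix

theorem submatrix_of_getD_append {α β R : Type*} (f : α → β → R) (a : α) (b : β) {m k N : ℕ}
    (h : m + k = N) {r₀ r₁ : List α} {c₀ c₁ : List β} (hr : r₀.length = m)
    (hc : c₀.length = m) :
    (of fun i i' : Fin N => f ((r₀ ++ r₁).getD i a) ((c₀ ++ c₁).getD i' b)).submatrix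
        (finSumFinEquiv.trans (finCongr h)) (finSumFinEquiv.trans (finCongr h)) =
      fromBlocks (of fun (i : Fin m) (i' : Fin m) => f (r₀.getD i a) (c₀.getD i' b))
        (of fun (i : Fin m) (i' : Fin k) => f (r₀.getD i a) (c₁.getD i' b))
        (of fun (i : Fin k) (i' : Fin m) => f (r₁.getD i a) (c₀.getD i' b))
        (of fun (i : Fin k) (i' : Fin k) => f (r₁.getD i a) (c₁.getD i' b)) := by
  have hr₀ : ∀ i : Fin m, (r₀ ++ r₁).getD i a = r₀.getD i a := fun i =>
    List.getD_append _ _ _ _ (by omega)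
  have hc₀ : ∀ i : Fin m, (c₀ ++ c₁).getD i b = c₀.getD i b := fun i =>
    List.getD_append _ _ _ _ (by omega)
  have hr₁ : ∀ i : Fin k, (r₀ ++ r₁).getD (m + i) a = r₁.getD i a := fun i => by
    rw [List.getD_append_right _ _ _ _ (by omega), hr, Nat.add_sub_cancel_left]
  have hc₁ : ∀ i : Fin k, (c₀ ++ c₁).getD (m + i) b = c₁.getD i b := fun i => by
    rw [List.getD_append_right _ _ _ _ (by omega), hc, Nat.add_sub_cancel_left]
  ext (i | i) (i' | i') <;>
    simp only [submatrix_apply, Equiv.trans_apply, finSumFinEquiv_apply_left,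
      finSumFinEquiv_apply_right, finCongr_apply, Fin.val_cast, Fin.val_castAdd, Fin.val_natAdd,
      of_apply, fromBlocks_apply₁₁, fromBlocks_apply₁₂, fromBlocks_apply₂₁, fromBlocks_apply₂₂,
      hr₀, hc₀, hr₁, hc₁]

theorem det_fromBlocks_submatrix_add {m k R : Type*} [Fintype m] [Fintype k] [DecidableEq m]
    [DecidableEq k] [CommRing R] (A : Matrix m m R) (C : Matrix k m R) (D : Matrix k k R)
    (σ : k → m) :
    (fromBlocks A (A.submatrix id σ) C (C.submatrix id σ + D)).det = A.det * D.det := by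
  have hfactor : fromBlocks A (A.submatrix id σ) C (C.submatrix id σ + D) =
      fromBlocks A 0 C D * fromBlocks 1 ((1 : Matrix m m R).submatrix (Equiv.refl m) σ) 0 1 := by
    rw [fromBlocks_multiply, mul_submatrix_one, mul_submatrix_one]
    simp
  rw [hfactor, det_mul, det_fromBlocks_zero₁₂, det_fromBlocks_zero₂₁, det_one, det_one, mul_one,
    mul_one]

end BlockMatrices

theorem nuSub_fst_add_snd {ν : ℕ × ℕ} {j : ℕ} (h : j ≤ (ν.1 + ν.2) / 2) :
    (nuSub ν j).1 + (nuSub ν j).2 = ν.1 + ν.2 := by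
  simp only [nuSub]
  omega

theorem nuSub_nuSub {ν : ℕ × ℕ} {j : ℕ} (h : j ≤ (ν.1 + ν.2) / 2) (i : ℕ) :
    nuSub (nuSub ν j) i = nuSub ν i := by
  conv_lhs => rw [nuSub, nuSub_fst_add_snd h]
  rfl

theorem Shs_zero_right (n : ℕ) (ν : ℕ × ℕ) (j : ℕ) : Shs n ν j 0 = 1 := by
  simp [Shs, Finset.Nat.antidiagonalTuple_zero_right]

theorem Shs_eq_completeHomogeneous (n : ℕ) (ν : ℕ × ℕ) (j m : ℕ) :
    (Shs n ν j m : ℤ) =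
      completeHomogeneous (Fin.snoc (fun i : Fin j => (ell n (nuSub ν i) : ℤ)) (ell n ν)) m := by
  simp only [Shs, completeHomogeneous, Nat.cast_sum, Nat.cast_prod, Nat.cast_pow]
  refine sum_congr rfl fun a _ => prod_congr rfl fun i _ => ?_
  simp only [Fin.snoc, apply_ite (Nat.cast : ℕ → ℤ), cast_eq, Fin.coe_castLT, dite_eq_ite]

theorem Shs_succ_sub_Shs_nuSub (n : ℕ) {ν : ℕ × ℕ} {j : ℕ} (h : j ≤ (ν.1 + ν.2) / 2) (m : ℕ) :
    (Shs n ν j (m + 1) : ℤ) - Shs n (nuSub ν j) j (m + 1) =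
      ((ell n ν : ℤ) - ell n (nuSub ν j)) * Shs n ν (j + 1) m := by
  simp only [Shs_eq_completeHomogeneous, nuSub_nuSub h]
  rw [completeHomogeneous_snoc_sub_snoc]
  congr 3
  exact Fin.snoc_init_self (fun i : Fin (j + 1) => (ell n (nuSub ν i) : ℤ))

def entryN (n j : ℕ) (μ ν : ℕ × ℕ) : ℤ :=
  2 ^ (μ.2 - j) * ((ν.1 + ν.2 : ℕ) : ℤ) ^ (μ.1 - μ.2) * (Shs n ν j (μ.2 - j) : ℤ)

theorem Ndj_eq_of (n d j : ℕ) :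
    Ndj n d j = Matrix.of fun i i' : Fin (Lamj n d j).card =>
      entryN n j ((rowListJ n d j).getD i (0, 0)) ((colListJ n d j).getD i' (0, 0)) :=
  rfl

theorem entryN_of_snd_eq (n : ℕ) {j : ℕ} {μ : ℕ × ℕ} (hμ : μ.2 = j) (ν : ℕ × ℕ) :
    entryN n j μ ν = ((ν.1 + ν.2 : ℕ) : ℤ) ^ (μ.1 - j) := by
  simp [entryN, hμ, Shs_zero_right]

def colFactor (n j : ℕ) (ν : ℕ × ℕ) : ℤ := 2 * ((ell n ν : ℤ) - ell n (nuSub ν j))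

theorem entryN_eq_entryN_nuSub_add (n : ℕ) {j : ℕ} {μ ν : ℕ × ℕ} (hμ : j + 1 ≤ μ.2)
    (hν : j ≤ (ν.1 + ν.2) / 2) :
    entryN n j μ ν = entryN n j μ (nuSub ν j) +
      colFactor n j ν * entryN n (j + 1) μ ν := by
  obtain ⟨m, hm⟩ : ∃ m, μ.2 - j = m + 1 := ⟨μ.2 - (j + 1), by omega⟩
  have hm' : μ.2 - (j + 1) = m := by omega
  simp only [entryN, colFactor, nuSub_fst_add_snd hν, hm, hm']
  linear_combination (2 ^ (m + 1) * ((ν.1 + ν.2 : ℕ) : ℤ) ^ (μ.1 - μ.2)) *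
    Shs_succ_sub_Shs_nuSub n hν m

theorem mem_Lamj {n d j : ℕ} {μ : ℕ × ℕ} :
    μ ∈ Lamj n d j ↔ μ.2 ≤ μ.1 ∧ μ.1 + μ.2 ≤ d ∧ μ.2 ≤ n ∧ j ≤ μ.2 := by
  simp only [Lamj, Lam, Pkn, mem_filter, mem_biUnion, mem_product, mem_range]
  constructor
  · rintro ⟨⟨k, hk, -, h⟩, hj⟩
    omega
  · intro h
    exact ⟨⟨μ.1 + μ.2, by omega, ⟨by omega, by omega⟩, by omega⟩, h.2.2.2⟩

theorem mem_LamStarj {n d j : ℕ} {ν : ℕ × ℕ} :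
    ν ∈ LamStarj n d j ↔
      ν.2 ≤ ν.1 ∧ ν.1 + ν.2 ≤ d ∧ (ν.1 + ν.2) / 2 ≤ ν.2 + n ∧ ν.2 + j ≤ (ν.1 + ν.2) / 2 := by
  simp only [LamStarj, LamStar, PknStar, mem_filter, mem_biUnion, mem_product, mem_range]
  constructor
  · rintro ⟨⟨k, hk, -, h⟩, hj⟩
    omega
  · intro h
    exact ⟨⟨ν.1 + ν.2, by omega, ⟨by omega, by omega⟩, by omega⟩, h.2.2.2⟩

theorem card_LamStarj (n d j : ℕ) : (LamStarj n d j).card = (Lamj n d j).card := by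
  let f : ℕ × ℕ → ℕ × ℕ := fun ν => (ν.1 + ν.2 - ((ν.1 + ν.2) / 2 - ν.2), (ν.1 + ν.2) / 2 - ν.2)
  refine card_bij' (fun ν _ => f ν) (fun μ _ => f μ) ?_ ?_ ?_ ?_
  · intro ν hν
    rw [mem_LamStarj] at hν
    rw [mem_Lamj]
    simp only [f]
    omega
  · intro μ hμ
    rw [mem_Lamj] at hμ
    rw [mem_LamStarj]
    simp only [f]
    omega
  · intro ν hν
    rw [mem_LamStarj] at hν
    ext <;> simp only [f] <;> omega
  · intro μ hμ
    rw [mem_Lamj] at hμ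
    ext <;> simp only [f] <;> omega

def rowList₀ (d j : ℕ) : List (ℕ × ℕ) := (List.range (d - 2 * j + 1)).map fun i => (j + i, j)

def colList₀ (d j : ℕ) : List (ℕ × ℕ) :=
  (List.range (d - 2 * j + 1)).map fun i => (2 * j + i - i / 2, i / 2)

theorem length_rowList₀ (d j : ℕ) : (rowList₀ d j).length = d - 2 * j + 1 := by
  simp [rowList₀]

theorem length_colList₀ (d j : ℕ) : (colList₀ d j).length = d - 2 * j + 1 := by
  simp [colList₀]

theorem rowListJ_eq_append {n d j : ℕ} (hd : 2 * j ≤ d) (hn : j ≤ n) :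
    rowListJ n d j = rowList₀ d j ++ rowListJ n d (j + 1) := by
  refine sort_eq_append_sort _ ?_ ?_ ?_ ?_
  · refine List.pairwise_map.2 (List.pairwise_lt_range.imp fun h => ?_)
    simp only [rowRel, true_and]
    omega
  · exact List.nodup_range.map fun a b h => by simp only [Prod.mk.injEq] at h; omega
  · intro μ
    simp only [rowList₀, List.mem_map, List.mem_range, mem_Lamj]
    constructor
    · intro h
      by_cases hμ : μ.2 = j
      · exact Or.inl ⟨μ.1 - j, by omega, by simp only [Prod.ext_iff]; omega⟩
      · exact Or.inr (by omega)
    · rintro (⟨i, hi, rfl⟩ | h)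
      · dsimp only
        omega
      · omega
  · simp only [rowList₀, List.mem_map, List.mem_range, mem_Lamj]
    rintro _ ⟨i, hi, rfl⟩ μ hμ
    simp only [rowRel, ne_eq, Prod.ext_iff]
    omega

theorem colListJ_eq_append {n d j : ℕ} (hd : 2 * j ≤ d) (hn : j ≤ n) :
    colListJ n d j = colList₀ d j ++ colListJ n d (j + 1) := by
  refine sort_eq_append_sort _ ?_ ?_ ?_ ?_
  · refine List.pairwise_map.2 (List.pairwise_lt_range.imp fun h => ?_)
    simp only [colRel]
    omega
  · exact List.nodup_range.map fun a b h => by simp only [Prod.mk.injEq] at h; omega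
  · intro ν
    simp only [colList₀, List.mem_map, List.mem_range, mem_LamStarj]
    constructor
    · intro h
      by_cases hν : ν.2 + j = (ν.1 + ν.2) / 2
      · exact Or.inl ⟨ν.1 + ν.2 - 2 * j, by omega, by simp only [Prod.ext_iff]; omega⟩
      · exact Or.inr (by omega)
    · rintro (⟨i, hi, rfl⟩ | h)
      · dsimp only
        omega
      · omega
  · simp only [colList₀, List.mem_map, List.mem_range, mem_LamStarj]
    rintro _ ⟨i, hi, rfl⟩ ν hν
    simp only [colRel, ne_eq, Prod.ext_iff]
    omega

theorem rowList₀_getD {d j i : ℕ} (hi : i < d - 2 * j + 1) :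
    (rowList₀ d j).getD i (0, 0) = (j + i, j) := by
  simp [rowList₀, hi]

theorem colList₀_getD {d j i : ℕ} (hi : i < d - 2 * j + 1) :
    (colList₀ d j).getD i (0, 0) = (2 * j + i - i / 2, i / 2) := by
  simp [colList₀, hi]

theorem colList₀_getD_eq_nuSub {d j : ℕ} {ν : ℕ × ℕ} (hν : 2 * j ≤ ν.1 + ν.2)
    (hνd : ν.1 + ν.2 ≤ d) : (colList₀ d j).getD (ν.1 + ν.2 - 2 * j) (0, 0) = nuSub ν j := by
  rw [colList₀_getD (by omega), nuSub]
  ext <;> simp only <;> omega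

theorem card_Lamj_eq_add {n d j : ℕ} (hd : 2 * j ≤ d) (hn : j ≤ n) :
    d - 2 * j + 1 + (Lamj n d (j + 1)).card = (Lamj n d j).card := by
  rw [← length_sort rowRel, ← length_sort rowRel, ← rowListJ, ← rowListJ,
    rowListJ_eq_append hd hn, List.length_append, length_rowList₀]

theorem rowListJ_getD_mem {n d j : ℕ} (r : Fin (Lamj n d j).card) :
    (rowListJ n d j).getD r (0, 0) ∈ Lamj n d j :=
  getD_sort_mem _ _ r.2 _

theorem colListJ_getD_mem {n d j : ℕ} (c : Fin (Lamj n d j).card) :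
    (colListJ n d j).getD c (0, 0) ∈ LamStarj n d j :=
  getD_sort_mem _ _ (by rw [card_LamStarj]; exact c.2) _

theorem exists_Ndj_reindex_eq_fromBlocks {n d j : ℕ} (hd : 2 * j ≤ d) (hn : j ≤ n) :
    ∃ (e : Fin (d - 2 * j + 1) ⊕ Fin (Lamj n d (j + 1)).card ≃ Fin (Lamj n d j).card)
      (σ : Fin (Lamj n d (j + 1)).card → Fin (d - 2 * j + 1))
      (C : Matrix (Fin (Lamj n d (j + 1)).card) (Fin (d - 2 * j + 1)) ℤ),
      (Ndj n d j).submatrix e e =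
        Matrix.fromBlocks (vandInt (2 * j) (d - 2 * j + 1))
          ((vandInt (2 * j) (d - 2 * j + 1)).submatrix id σ) C
          (C.submatrix id σ + Ndj n d (j + 1) *
            Matrix.diagonal fun c : Fin (Lamj n d (j + 1)).card =>
              colFactor n j ((colListJ n d (j + 1)).getD c (0, 0))) := by
  have hcard := card_Lamj_eq_add hd hn
  have hrow := rowListJ_getD_mem (n := n) (d := d) (j := j + 1)
  have hcol := colListJ_getD_mem (n := n) (d := d) (j := j + 1)
  refine ⟨finSumFinEquiv.trans (finCongr hcard),
    fun c => ⟨((colListJ n d (j + 1)).getD c (0, 0)).1 + ((colListJ n d (j + 1)).getD c (0, 0)).2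
      - 2 * j, by have := mem_LamStarj.1 (hcol c); omega⟩,
    .of fun r i => entryN n j ((rowListJ n d (j + 1)).getD r (0, 0)) ((colList₀ d j).getD i (0, 0)),
    ?_⟩
  rw [Ndj_eq_of, rowListJ_eq_append hd hn, colListJ_eq_append hd hn,
    submatrix_of_getD_append _ _ _ _ (length_rowList₀ d j) (length_colList₀ d j)]
  refine Matrix.fromBlocks_inj.2 ⟨?_, ?_, rfl, ?_⟩
  · ext i i'
    rw [Matrix.of_apply, rowList₀_getD i.2, colList₀_getD i'.2,
      entryN_of_snd_eq n (rfl : (j + (i : ℕ), j).2 = j)]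
    simp only [vandInt]
    congr 2 <;> omega
  · ext i c
    obtain ⟨-, hνd, -, hνj⟩ := mem_LamStarj.1 (hcol c)
    rw [Matrix.of_apply, rowList₀_getD i.2, entryN_of_snd_eq n (rfl : (j + (i : ℕ), j).2 = j)]
    simp only [Matrix.submatrix_apply, id, vandInt]
    congr 2 <;> omega
  · ext r c
    obtain ⟨-, hνd, -, hνj⟩ := mem_LamStarj.1 (hcol c)
    obtain ⟨-, -, -, hμ⟩ := mem_Lamj.1 (hrow r)
    rw [Matrix.of_apply, Matrix.add_apply, Matrix.submatrix_apply, Matrix.of_apply, id,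
      colList₀_getD_eq_nuSub (by omega) hνd, Matrix.mul_diagonal, Ndj_eq_of, Matrix.of_apply,
      entryN_eq_entryN_nuSub_add n hμ (by omega)]
    ring

/-- For every integer `j` with `0 ≤ j ≤ min(⌊d/2⌋, n) - 1`,
`det(N_j) = det(V(2j, 2j+1, …, d)) · det(N_{j+1}) · ∏_{ν ∈ Λ*_{d,n,j+1}} 2(ℓ_ν - ℓ_{ν_{(j)}})`. -/
theorem det_Ndj (n d j : ℕ) (hj : j + 1 ≤ min (d / 2) n) :
    (Ndj n d j).det =
      (vandInt (2 * j) (d - 2 * j + 1)).det * (Ndj n d (j + 1)).det *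
        ∏ ν ∈ LamStarj n d (j + 1), 2 * ((ell n ν : ℤ) - (ell n (nuSub ν j) : ℤ)) := by
  obtain ⟨hd, hn⟩ := le_min_iff.1 hj
  obtain ⟨e, σ, C, hN⟩ := exists_Ndj_reindex_eq_fromBlocks (n := n) (by omega : 2 * j ≤ d)
    (by omega : j ≤ n)
  rw [← Matrix.det_submatrix_equiv_self e, hN, det_fromBlocks_submatrix_add, Matrix.det_mul,
    Matrix.det_diagonal, colListJ, prod_getD_sort colRel _ (card_LamStarj n d (j + 1)), mul_assoc]
  rfl

end Capelli
end

section
/- For all nonnegative integers n and k, Σ_{s=0}^{2n−2} g_k(s) = m(m+1)/2, where m = min(⌊k/2⌋, n). -/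
open Finset Polynomial

namespace Capelli

lemma mem_PknStar {n k : ℕ} {ν : ℕ × ℕ} :
    ν ∈ PknStar n k ↔ ν.2 ≤ ν.1 ∧ ν.1 + ν.2 = k ∧ k / 2 ≤ ν.2 + n := by
  unfold PknStar
  simp only [Finset.mem_filter, Finset.mem_product, Finset.mem_range]
  omega

lemma ell_le (n : ℕ) (ν : ℕ × ℕ) : ell n ν ≤ n := by
  unfold ell; omega

lemma ell_injOn {n k : ℕ} {ν ν' : ℕ × ℕ} (h : ν ∈ PknStar n k) (h' : ν' ∈ PknStar n k)
    (he : ell n ν = ell n ν') : ν = ν' := by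
  rw [mem_PknStar] at h h'
  unfold ell at he
  rw [Prod.ext_iff]
  omega

lemma card_PknStar (n k : ℕ) : (PknStar n k).card = min (k / 2) n + 1 := by
  have himg : PknStar n k = (Finset.Icc (k / 2 - n) (k / 2)).image (fun j => (k - j, j)) := by
    ext ν
    rw [mem_PknStar]
    simp only [Finset.mem_image, Finset.mem_Icc]
    constructor
    · intro hm
      exact ⟨ν.2, by omega, by rw [Prod.ext_iff]; constructor <;> simp <;> omega⟩
    · rintro ⟨j, hj, rfl⟩
      simp only
      omega
  rw [himg, Finset.card_image_of_injOn, Nat.card_Icc]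
  · omega
  · intro a _ b _ hab
    simpa using congrArg Prod.snd hab

/-- For all nonnegative integers `n` and `k`,
`Σ_{s=0}^{2n-2} g_k(s) = m(m+1)/2` where `m = min(⌊k/2⌋, n)`. -/
theorem sum_gks (n k : ℕ) :
    ∑ s ∈ Finset.range (2 * n - 1), gks n k (s : ℤ) =
      min (k / 2) n * (min (k / 2) n + 1) / 2 := by
  classical
  set A := PknStar n k with hA
  set B := (A ×ˢ A).filter (fun p => ell n p.2 < ell n p.1) with hB
  set m := min (k / 2) n with hm
  -- Step 1: the sum equals B.card
  have hstep1 : ∑ s ∈ Finset.range (2 * n - 1), gks n k (s : ℤ) = B.card := by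
    have hbu : B = (Finset.range (2 * n - 1)).biUnion (fun s =>
        (A ×ˢ A).filter (fun p => ell n p.2 < ell n p.1 ∧
          (ell n p.1 : ℤ) + (ell n p.2 : ℤ) - 1 = (s : ℤ))) := by
      ext p
      simp only [hB, Finset.mem_biUnion, Finset.mem_filter, Finset.mem_range]
      constructor
      · rintro ⟨hp, hlt⟩
        have h1 := ell_le n p.1
        have h2 := ell_le n p.2
        exact ⟨ell n p.1 + ell n p.2 - 1, by omega, hp, hlt, by push_cast; omega⟩
      · rintro ⟨s, _, hp, hlt, _⟩
        exact ⟨hp, hlt⟩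
    have hdisj : ∀ s ∈ Finset.range (2 * n - 1), ∀ t ∈ Finset.range (2 * n - 1), s ≠ t →
        Disjoint ((A ×ˢ A).filter (fun p => ell n p.2 < ell n p.1 ∧
            (ell n p.1 : ℤ) + (ell n p.2 : ℤ) - 1 = (s : ℤ)))
          ((A ×ˢ A).filter (fun p => ell n p.2 < ell n p.1 ∧
            (ell n p.1 : ℤ) + (ell n p.2 : ℤ) - 1 = (t : ℤ))) := by
      intro s _ t _ hst
      rw [Finset.disjoint_left]
      intro p hp hq
      simp only [Finset.mem_filter] at hp hq
      exact hst (by exact_mod_cast hp.2.2.symm.trans hq.2.2)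
    rw [hbu, Finset.card_biUnion hdisj]
    rfl
  -- Step 2: cardinality of A
  have hcard : A.card = m + 1 := card_PknStar n k
  -- Step 3: 2 * B.card + A.card = A.card * A.card
  have hsplit1 := Finset.card_filter_add_card_filter_not
    (s := A ×ˢ A) (p := fun p => ell n p.2 < ell n p.1)
  have hsplit2 := Finset.card_filter_add_card_filter_not
    (s := (A ×ˢ A).filter (fun p => ¬ ell n p.2 < ell n p.1))
    (p := fun p => ell n p.1 < ell n p.2)
  -- the swap bijection between the two strict parts
  have hswap : (((A ×ˢ A).filter (fun p => ¬ ell n p.2 < ell n p.1)).filter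
      (fun p => ell n p.1 < ell n p.2)).card = B.card := by
    have himg : ((A ×ˢ A).filter (fun p => ¬ ell n p.2 < ell n p.1)).filter
        (fun p => ell n p.1 < ell n p.2) = B.image Prod.swap := by
      ext p
      simp only [hB, Finset.mem_image, Finset.mem_filter, Finset.mem_product]
      constructor
      · rintro ⟨⟨⟨h1, h2⟩, _⟩, h4⟩
        exact ⟨Prod.swap p, ⟨⟨h2, h1⟩, h4⟩, Prod.swap_swap p⟩
      · rintro ⟨q, ⟨⟨h1, h2⟩, h3⟩, rfl⟩
        simp only [Prod.fst_swap, Prod.snd_swap]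
        exact ⟨⟨⟨h2, h1⟩, by omega⟩, h3⟩
    rw [himg, Finset.card_image_of_injective _ Prod.swap_injective]
  -- the equal part is the diagonal
  have hdiag : (((A ×ˢ A).filter (fun p => ¬ ell n p.2 < ell n p.1)).filter
      (fun p => ¬ ell n p.1 < ell n p.2)) = A.diag := by
    ext p
    simp only [Finset.mem_filter, Finset.mem_product, Finset.mem_diag]
    constructor
    · rintro ⟨⟨⟨h1, h2⟩, h3⟩, h4⟩
      have heq : ell n p.1 = ell n p.2 := by omega
      have := ell_injOn (k := k) h1 h2 heq
      exact ⟨h1, this⟩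
    · rintro ⟨h1, h2⟩
      exact ⟨⟨⟨h1, h2 ▸ h1⟩, by rw [h2]; omega⟩, by rw [h2]; omega⟩
  have hprod : (A ×ˢ A).card = (m + 1) * (m + 1) := by
    rw [Finset.card_product, hcard]
  have hdiagcard : (((A ×ˢ A).filter (fun p => ¬ ell n p.2 < ell n p.1)).filter
      (fun p => ¬ ell n p.1 < ell n p.2)).card = m + 1 := by
    rw [hdiag, Finset.diag_card, hcard]
  have hBcard : B.card = ((A ×ˢ A).filter (fun p => ell n p.2 < ell n p.1)).card := rfl
  rw [hstep1]
  -- Step 4: arithmetic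
  have hkey : 2 * B.card + (m + 1) = (m + 1) * (m + 1) := by
    rw [hBcard] at hswap ⊢
    omega
  have hring : (m + 1) * (m + 1) = m * (m + 1) + (m + 1) := by ring
  have h2 : 2 * B.card = m * (m + 1) := Nat.add_right_cancel (hkey.trans hring)
  rw [← h2]
  exact (Nat.mul_div_cancel_left _ two_pos).symm

end Capelli
end
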